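/- arXiv:2202.12445 — 2 statements merged into one kernel-verified Lean document; each statement's English description precedes it below -/
import Mathlib

section
/- Let L > 0 and suppose that almost surely |τ̂| ≤ L and |τ̂_k(X)| ≤ L for every k ∈ {1,…,K}. Let (X_i, Y_i, Z_i), i = 1,…,m, be i.i.d. copies of (X, Y, Z), and let ŵ be any minimizer of the empirical stacking loss ℓ̂ over the simplex Δ_K. Then for every δ ∈ (0,1), with probability at least 1 − δ, ‖Σ_k ŵ_k τ̂_k − τ‖₂² ≤ min_{w ∈ Δ_K} ‖Σ_k w_k τ̂_k − τ‖₂² + 8√2 · L² √(log(2(K+1)²/δ)/m). In particular the stacked model is competitive with the best convex combination of the candidate models, not merely the best single candidate. -/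
/-!
For `w ∈ Δ_K` one has `(τ̂ - Σ_k w_k τ̂_k)² = Σ_{k,l} w_k w_l (τ̂ - τ̂_k)(τ̂ - τ̂_l)`, so both the
empirical and the population stacking loss are convex combinations of the `K²` cross moments of
the residuals `τ̂ - τ̂_k`. These residual products are bounded by `4L²`, so Hoeffding's inequality
and a union bound give, with probability at least `1 - δ`, that every empirical cross moment is
within `D = 4√2 L² √(log (2(K+1)²/δ) / m)` of its mean; hence `|ℓ̂ - ℓ| ≤ D` on all of `Δ_K`.

Independently, since `Z` is independent of `(X, Y₀, Y₁)` with `P(Z = 1) = p`, the pseudo-outcome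
is unbiased against functions of `X`: `E[τ̂ g(X)] = E[(Y₁ - Y₀) g(X)] = E[τ(X) g(X)]`. Therefore
`ℓ(w) = ‖Σ_k w_k τ̂_k - τ‖₂² + E[τ̂²] - E[τ(X)²]`, and the oracle inequality is the usual
empirical risk minimisation chain `ℓ(ŵ) ≤ ℓ̂(ŵ) + D ≤ ℓ̂(w) + D ≤ ℓ(w) + 2D`.
-/

open MeasureTheory ProbabilityTheory Real

section Hoeffding

variable {Ω : Type*} [MeasurableSpace Ω] {P : Measure Ω} [IsProbabilityMeasure P]

theorem measureReal_abs_mean_sub_ge_le {m : ℕ} (hm : 0 < m) {V : Fin m → Ω → ℝ}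
    (hV : ∀ i, AEMeasurable (V i) P) (hind : iIndepFun V P) {C c : ℝ}
    (hC : ∀ i, ∀ᵐ ω ∂P, |V i ω| ≤ C) (hmean : ∀ i, P[V i] = c) {ε : ℝ} (hε : 0 ≤ ε) :
    P.real {ω | ε ≤ |(1 / (m : ℝ)) * ∑ i, V i ω - c|}
      ≤ 2 * exp (-(m * ε ^ 2) / (2 * C ^ 2)) := by
  set σ := (‖C - -C‖₊ / 2) ^ 2
  have hσ : ((∑ _i : Fin m, σ : NNReal) : ℝ) = m * C ^ 2 := by
    simp [σ, sub_neg_eq_add, ← two_mul]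
  have hm' : (0 : ℝ) < m := Nat.cast_pos.2 hm
  have htail : ∀ W : Fin m → Ω → ℝ, iIndepFun W P → (∀ i, HasSubgaussianMGF (W i) σ P) →
      P.real {ω | m * ε ≤ ∑ i, W i ω} ≤ exp (-(m * ε ^ 2) / (2 * C ^ 2)) := by
    intro W hWind hW
    refine (HasSubgaussianMGF.measure_sum_ge_le_of_iIndepFun hWind (s := Finset.univ)
      (fun i _ => hW i) (by positivity)).trans_eq ?_
    rw [hσ]
    congr 1
    field_simp
  have hsubG : ∀ i, HasSubgaussianMGF (fun ω => V i ω - c) σ P := by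
    intro i
    rw [← hmean i]
    exact hasSubgaussianMGF_of_mem_Icc (hV i) ((hC i).mono fun ω h => abs_le.1 h)
  have hsplit : {ω | ε ≤ |(1 / (m : ℝ)) * ∑ i, V i ω - c|}
      ⊆ {ω | m * ε ≤ ∑ i, (V i ω - c)} ∪ {ω | m * ε ≤ ∑ i, -(V i ω - c)} := by
    intro ω hω
    have hS : (1 / (m : ℝ)) * ∑ i, V i ω - c = (∑ i, (V i ω - c)) / m := by
      simp only [Finset.sum_sub_distrib, Finset.sum_const, Finset.card_univ, Fintype.card_fin,
        nsmul_eq_mul]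
      field_simp
    simp only [Set.mem_ofPred_eq, hS, le_abs', le_div_iff₀ hm', div_le_iff₀ hm'] at hω
    simp only [Set.mem_union, Set.mem_ofPred_eq, Finset.sum_neg_distrib]
    rcases hω with h | h
    · right; linarith
    · left; linarith
  calc P.real {ω | ε ≤ |(1 / (m : ℝ)) * ∑ i, V i ω - c|}
      ≤ P.real {ω | m * ε ≤ ∑ i, (V i ω - c)} + P.real {ω | m * ε ≤ ∑ i, -(V i ω - c)} :=
        (measureReal_mono hsplit).trans (measureReal_union_le _ _)
    _ ≤ 2 * exp (-(m * ε ^ 2) / (2 * C ^ 2)) := by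
        rw [two_mul]
        exact add_le_add (htail _ (hind.comp (fun _ x => x - c) fun _ => by fun_prop) hsubG)
          (htail _ (hind.comp (fun _ x => -(x - c)) fun _ => by fun_prop) fun i => (hsubG i).neg)

theorem measureReal_abs_mean_comp_sub_integral_ge_le {E : Type*} [MeasurableSpace E] {m : ℕ}
    (hm : 0 < m) {ξs : Fin m → Ω → E} {ξ : Ω → E} (hind : iIndepFun ξs P)
    (hident : ∀ i, IdentDistrib (ξs i) ξ P P) {f : E → ℝ} (hf : Measurable f) {C : ℝ}
    (hC : ∀ᵐ ω ∂P, |f (ξ ω)| ≤ C) {ε : ℝ} (hε : 0 ≤ ε) :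
    P.real {ω | ε ≤ |(1 / (m : ℝ)) * ∑ i, f (ξs i ω) - ∫ ω', f (ξ ω') ∂P|}
      ≤ 2 * exp (-(m * ε ^ 2) / (2 * C ^ 2)) :=
  measureReal_abs_mean_sub_ge_le hm (fun i => hf.comp_aemeasurable (hident i).aemeasurable_fst)
    (hind.comp (fun _ => f) fun _ => hf)
    (fun i => (hident i).symm.ae_snd (measurableSet_le hf.abs measurable_const) hC)
    (fun i => ((hident i).comp hf).integral_eq) hε

theorem one_sub_le_measure_forall_notMem {ι : Type*} [Fintype ι] {s : ι → Set Ω} {q : ℝ}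
    (hs : ∀ i, P.real (s i) ≤ q) :
    1 - ENNReal.ofReal (Fintype.card ι * q) ≤ P {ω | ∀ i, ω ∉ s i} := by
  have hcompl : {ω | ∀ i, ω ∉ s i} = (⋃ i, s i)ᶜ := by ext; simp
  have hunion : P (⋃ i, s i) ≤ ENNReal.ofReal (Fintype.card ι * q) := by
    rw [← ofReal_measureReal]
    refine ENNReal.ofReal_le_ofReal ((measureReal_iUnion_fintype_le s).trans ?_)
    simpa using Finset.sum_le_sum fun i (_ : i ∈ Finset.univ) => hs i
  rw [hcompl, tsub_le_iff_right, add_comm]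
  calc 1 = P Set.univ := measure_univ.symm
    _ ≤ P (⋃ i, s i) + P (⋃ i, s i)ᶜ := measure_univ_le_add_compl _
    _ ≤ _ := by gcongr

theorem two_mul_exp_neg_eq_two_div {m : ℕ} (hm : 0 < m) {C R : ℝ} (hC : C ≠ 0) (hR : 1 ≤ R) :
    2 * exp (-(m * (√2 * C * √(log R / m)) ^ 2) / (2 * C ^ 2)) = 2 / R := by
  have hm' : (m : ℝ) ≠ 0 := (Nat.cast_pos.2 hm).ne'
  rw [mul_pow, mul_pow, sq_sqrt zero_le_two, sq_sqrt (div_nonneg (log_nonneg hR) m.cast_nonneg)]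
  have hexponent : -(m * (2 * C ^ 2 * (log R / m))) / (2 * C ^ 2) = -log R := by
    field_simp
  rw [hexponent, exp_neg, exp_log (by linarith), div_eq_mul_inv]

theorem one_sub_le_measure_forall_abs_mean_comp_sub_integral_lt {E ι : Type*}
    [MeasurableSpace E] [Fintype ι] {m : ℕ} (hm : 0 < m) {ξs : Fin m → Ω → E} {ξ : Ω → E}
    (hind : iIndepFun ξs P) (hident : ∀ i, IdentDistrib (ξs i) ξ P P) {f : ι → E → ℝ}
    (hf : ∀ j, Measurable (f j)) {C : ℝ} (hC0 : 0 < C) (hC : ∀ j, ∀ᵐ ω ∂P, |f j (ξ ω)| ≤ C)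
    {R : ℝ} (hR : 1 ≤ R) :
    1 - ENNReal.ofReal (Fintype.card ι * (2 / R))
      ≤ P {ω | ∀ j, |(1 / (m : ℝ)) * ∑ i, f j (ξs i ω) - ∫ ω', f j (ξ ω') ∂P|
          < √2 * C * √(log R / m)} := by
  have hdev : ∀ j, P.real {ω | √2 * C * √(log R / m)
      ≤ |(1 / (m : ℝ)) * ∑ i, f j (ξs i ω) - ∫ ω', f j (ξ ω') ∂P|} ≤ 2 / R := fun j =>
    (measureReal_abs_mean_comp_sub_integral_ge_le hm hind hident (hf j) (hC j)
      (by positivity)).trans_eq (two_mul_exp_neg_eq_two_div hm hC0.ne' hR)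
  simpa only [Set.mem_ofPred_eq, not_le] using one_sub_le_measure_forall_notMem hdev

end Hoeffding

section Stacking

variable {ι : Type*} [Fintype ι] {v : ι → ℝ}

theorem sq_sub_sum_mul_eq_sum_sum (hv : ∑ k, v k = 1) (u : ℝ) (w : ι → ℝ) :
    (u - ∑ k, v k * w k) ^ 2 = ∑ k, ∑ l, v k * v l * ((u - w k) * (u - w l)) := by
  have hconvex : u - ∑ k, v k * w k = ∑ k, v k * (u - w k) := by
    simp only [mul_sub, Finset.sum_sub_distrib, ← Finset.sum_mul, hv, one_mul]
  rw [hconvex, sq, Finset.sum_mul_sum]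
  exact Finset.sum_congr rfl fun k _ => Finset.sum_congr rfl fun l _ => by ring

theorem mul_sum_sq_sub_sum_mul_eq {n : Type*} [Fintype n] (hv : ∑ k, v k = 1) (c : ℝ)
    (u : n → ℝ) (w : n → ι → ℝ) :
    c * ∑ i, (u i - ∑ k, v k * w i k) ^ 2
      = ∑ k, ∑ l, v k * v l * (c * ∑ i, (u i - w i k) * (u i - w i l)) := by
  simp only [sq_sub_sum_mul_eq_sum_sum hv, Finset.mul_sum]
  rw [Finset.sum_comm]
  refine Finset.sum_congr rfl fun k _ => ?_
  rw [Finset.sum_comm]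
  exact Finset.sum_congr rfl fun l _ => Finset.sum_congr rfl fun i _ => by ring

theorem integral_sq_sub_sum_mul_eq {α : Type*} [MeasurableSpace α] {μ : Measure α}
    (hv : ∑ k, v k = 1) (u : α → ℝ) (w : ι → α → ℝ)
    (hint : ∀ k l, Integrable (fun x => (u x - w k x) * (u x - w l x)) μ) :
    ∫ x, (u x - ∑ k, v k * w k x) ^ 2 ∂μ
      = ∑ k, ∑ l, v k * v l * ∫ x, (u x - w k x) * (u x - w l x) ∂μ := by
  simp only [sq_sub_sum_mul_eq_sum_sum hv]
  rw [integral_finsetSum _ fun k _ => integrable_finsetSum _ fun l _ => (hint k l).const_mul _]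
  refine Finset.sum_congr rfl fun k _ => ?_
  rw [integral_finsetSum _ fun l _ => (hint k l).const_mul _]
  exact Finset.sum_congr rfl fun l _ => integral_const_mul _ _

theorem abs_sum_sum_mul_sub_le (hv0 : ∀ k, 0 ≤ v k) (hv1 : ∑ k, v k = 1)
    {a b : ι → ι → ℝ} {D : ℝ} (hab : ∀ k l, |a k l - b k l| ≤ D) :
    |∑ k, ∑ l, v k * v l * a k l - ∑ k, ∑ l, v k * v l * b k l| ≤ D := by
  calc |∑ k, ∑ l, v k * v l * a k l - ∑ k, ∑ l, v k * v l * b k l|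
      = |∑ k, ∑ l, v k * v l * (a k l - b k l)| := by
        simp only [mul_sub, Finset.sum_sub_distrib]
    _ ≤ ∑ k, ∑ l, v k * v l * D := by
        refine (Finset.abs_sum_le_sum_abs _ _).trans (Finset.sum_le_sum fun k _ => ?_)
        refine (Finset.abs_sum_le_sum_abs _ _).trans (Finset.sum_le_sum fun l _ => ?_)
        rw [abs_mul, abs_of_nonneg (mul_nonneg (hv0 k) (hv0 l))]
        exact mul_le_mul_of_nonneg_left (hab k l) (mul_nonneg (hv0 k) (hv0 l))
    _ = D := by simp only [← Finset.sum_mul, ← Finset.mul_sum, hv1, mul_one, one_mul]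

theorem abs_mul_sum_sq_sub_integral_sq_le {n α : Type*} [Fintype n] [MeasurableSpace α]
    {μ : Measure α} (hv0 : ∀ k, 0 ≤ v k) (hv1 : ∑ k, v k = 1) (c : ℝ) (a : n → ℝ)
    (b : n → ι → ℝ) (u : α → ℝ) (w : ι → α → ℝ)
    (hint : ∀ k l, Integrable (fun x => (u x - w k x) * (u x - w l x)) μ) {D : ℝ}
    (hclose : ∀ k l, |c * ∑ i, (a i - b i k) * (a i - b i l)
      - ∫ x, (u x - w k x) * (u x - w l x) ∂μ| ≤ D) :
    |c * ∑ i, (a i - ∑ k, v k * b i k) ^ 2 - ∫ x, (u x - ∑ k, v k * w k x) ^ 2 ∂μ| ≤ D := by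
  rw [mul_sum_sq_sub_sum_mul_eq hv1, integral_sq_sub_sum_mul_eq hv1 u w hint]
  exact abs_sum_sum_mul_sub_le hv0 hv1 hclose

end Stacking

theorem abs_sub_mul_sub_le {a b c L : ℝ} (ha : |a| ≤ L) (hb : |b| ≤ L) (hc : |c| ≤ L) :
    |(a - b) * (a - c)| ≤ 4 * L ^ 2 := by
  have hab : |a - b| ≤ 2 * L := (abs_sub _ _).trans (by linarith)
  have hac : |a - c| ≤ 2 * L := (abs_sub _ _).trans (by linarith)
  rw [abs_mul]
  nlinarith [abs_nonneg (a - b), abs_nonneg (a - c)]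

section StackingDeviation

variable {Ω : Type*} [MeasurableSpace Ω] {P : Measure Ω} [IsProbabilityMeasure P]

theorem one_sub_le_measure_forall_simplex_abs_mean_sq_sub_integral_sq_le {E ι : Type*}
    [MeasurableSpace E] [Fintype ι] {m : ℕ} (hm : 0 < m) {ξs : Fin m → Ω → E} {ξ : Ω → E}
    (hind : iIndepFun ξs P) (hident : ∀ i, IdentDistrib (ξs i) ξ P P) {u : E → ℝ}
    {w : ι → E → ℝ} (hu : Measurable u) (hw : ∀ k, Measurable (w k)) {L : ℝ} (hL : 0 < L)
    (hbu : ∀ᵐ ω ∂P, |u (ξ ω)| ≤ L) (hbw : ∀ k, ∀ᵐ ω ∂P, |w k (ξ ω)| ≤ L) {R : ℝ} (hR : 1 ≤ R) :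
    1 - ENNReal.ofReal (Fintype.card ι ^ 2 * (2 / R))
      ≤ P {ω | ∀ v : ι → ℝ, (∀ k, 0 ≤ v k) → ∑ k, v k = 1 →
          |(1 / (m : ℝ)) * ∑ i, (u (ξs i ω) - ∑ k, v k * w k (ξs i ω)) ^ 2
            - ∫ ω', (u (ξ ω') - ∑ k, v k * w k (ξ ω')) ^ 2 ∂P|
          ≤ √2 * (4 * L ^ 2) * √(log R / m)} := by
  set res : ι × ι → E → ℝ := fun kl x => (u x - w kl.1 x) * (u x - w kl.2 x) with hres
  have hres_meas : ∀ kl, Measurable (res kl) := fun kl => by simp only [hres]; fun_prop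
  have hres_bound : ∀ kl, ∀ᵐ ω ∂P, |res kl (ξ ω)| ≤ 4 * L ^ 2 := fun kl => by
    filter_upwards [hbu, hbw kl.1, hbw kl.2] with ω h0 h1 h2
    exact abs_sub_mul_sub_le h0 h1 h2
  have hξ : AEMeasurable ξ P := (hident ⟨0, hm⟩).aemeasurable_snd
  rw [sq, ← Nat.cast_mul, ← Fintype.card_prod]
  refine (one_sub_le_measure_forall_abs_mean_comp_sub_integral_lt hm hind hident hres_meas
    (by positivity) hres_bound hR).trans (measure_mono fun ω hω v hv0 hv1 => ?_)
  exact abs_mul_sum_sq_sub_integral_sq_le hv0 hv1 _ _ _ _ _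
    (fun k l => Integrable.of_bound ((hres_meas (k, l)).comp_aemeasurable hξ).aestronglyMeasurable
      _ (by simpa [hres] using hres_bound (k, l))) fun k l => (hω (k, l)).le

end StackingDeviation

theorem integral_sq_sub_eq_of_integral_mul_eq {α : Type*} [MeasurableSpace α] {μ : Measure α}
    {a b g : α → ℝ} (ha : MemLp a 2 μ) (hb : MemLp b 2 μ) (hg : MemLp g 2 μ)
    (h : ∫ x, a x * g x ∂μ = ∫ x, b x * g x ∂μ) :
    ∫ x, (g x - b x) ^ 2 ∂μ = ∫ x, (a x - g x) ^ 2 ∂μ - ∫ x, a x ^ 2 ∂μ + ∫ x, b x ^ 2 ∂μ := by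
  have hpt : ∀ x, (g x - b x) ^ 2
      = (a x - g x) ^ 2 - a x ^ 2 + b x ^ 2 + 2 * (a x * g x - b x * g x) := fun x => by ring
  simp only [hpt]
  have hag : Integrable (fun x => a x * g x) μ := ha.integrable_mul hg
  have hbg : Integrable (fun x => b x * g x) μ := hb.integrable_mul hg
  have hagi : Integrable (fun x => (a x - g x) ^ 2) μ := (ha.sub hg).integrable_sq
  have hdiff : Integrable (fun x => (a x - g x) ^ 2 - a x ^ 2) μ := hagi.sub ha.integrable_sq
  have hsum : Integrable (fun x => (a x - g x) ^ 2 - a x ^ 2 + b x ^ 2) μ :=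
    hdiff.add hb.integrable_sq
  have hcross : Integrable (fun x => 2 * (a x * g x - b x * g x)) μ := (hag.sub hbg).const_mul 2
  rw [integral_add hsum hcross, integral_add hdiff hb.integrable_sq,
    integral_sub hagi ha.integrable_sq, integral_const_mul, integral_sub hag hbg, h, sub_self,
    mul_zero, add_zero]

theorem ProbabilityTheory.IndepFun.ae_mem_of_ae_imp {Ω α β : Type*} [MeasurableSpace Ω]
    [MeasurableSpace α] [MeasurableSpace β] {μ : Measure Ω} {Z : Ω → α} {V : Ω → β}
    (hind : IndepFun Z V μ) {S : Set α} {T : Set β} (hS : MeasurableSet S)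
    (hT : MeasurableSet T) (hZS : μ (Z ⁻¹' S) ≠ 0) (h : ∀ᵐ ω ∂μ, Z ω ∈ S → V ω ∈ T) :
    ∀ᵐ ω ∂μ, V ω ∈ T := by
  have hnull : μ (Z ⁻¹' S ∩ V ⁻¹' Tᶜ) = 0 := by
    have hset : Z ⁻¹' S ∩ V ⁻¹' Tᶜ = {ω | ¬(Z ω ∈ S → V ω ∈ T)} := by ext; simp
    rwa [hset, ← ae_iff]
  rw [hind.measure_inter_preimage_eq_mul _ _ hS hT.compl, mul_eq_zero] at hnull
  exact ae_iff.2 (hnull.resolve_left hZS)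

theorem integral_mul_add_one_sub_mul_of_indepFun {Ω : Type*} [MeasurableSpace Ω] {P : Measure Ω}
    [IsProbabilityMeasure P] {Z A B : Ω → ℝ} (hZ : Measurable Z)
    (hZval : ∀ ω, Z ω = 0 ∨ Z ω = 1) {p : ℝ} (hp : 0 ≤ p)
    (hZp : P {ω | Z ω = 1} = ENNReal.ofReal p) (hA : Integrable A P) (hB : Integrable B P)
    (hZA : IndepFun Z A P) (hZB : IndepFun Z B P) :
    ∫ ω, (Z ω * A ω + (1 - Z ω) * B ω) ∂P = p * ∫ ω, A ω ∂P + (1 - p) * ∫ ω, B ω ∂P := by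
  have hZ01 : ∀ ω, ‖Z ω‖ ≤ 1 ∧ ‖1 - Z ω‖ ≤ 1 := fun ω => by
    rcases hZval ω with h | h <;> simp [h]
  have hZind : Z = Set.indicator {ω | Z ω = 1} 1 := by
    ext ω; rcases hZval ω with h | h <;> simp [h]
  have hZmean : ∫ ω, Z ω ∂P = p := by
    have hS : MeasurableSet {ω | Z ω = 1} := hZ (measurableSet_singleton 1)
    rw [hZind, integral_indicator_one hS, measureReal_def, hZp,
      ENNReal.toReal_ofReal hp]
  have hZA' : ∫ ω, Z ω * A ω ∂P = p * ∫ ω, A ω ∂P := by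
    rw [← hZmean]
    exact hZA.integral_mul_eq_mul_integral hZ.aestronglyMeasurable hA.aestronglyMeasurable
  have hZB' : ∫ ω, (1 - Z ω) * B ω ∂P = (1 - p) * ∫ ω, B ω ∂P := by
    have h1Z : ∫ ω, (1 - Z ω) ∂P = 1 - p := by
      rw [integral_sub (integrable_const 1) ((integrable_const 1).mono' hZ.aestronglyMeasurable
        (ae_of_all _ fun ω => (hZ01 ω).1)), hZmean]
      simp
    rw [← h1Z]
    exact (hZB.comp (measurable_const.sub measurable_id) measurable_id).integral_mul_eq_mul_integral
      (measurable_const.sub hZ).aestronglyMeasurable hB.aestronglyMeasurable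
  have hZAi : Integrable (fun ω => Z ω * A ω) P :=
    hA.bdd_mul hZ.aestronglyMeasurable (ae_of_all _ fun ω => (hZ01 ω).1)
  have hZBi : Integrable (fun ω => (1 - Z ω) * B ω) P :=
    hB.bdd_mul (measurable_const.sub hZ).aestronglyMeasurable (ae_of_all _ fun ω => (hZ01 ω).2)
  rw [integral_add hZAi hZBi, hZA', hZB']

theorem integral_mul_eq_integral_condExp_mul {Ω : Type*} {m m0 : MeasurableSpace Ω}
    {μ : Measure Ω} [IsFiniteMeasure μ] (hm : m ≤ m0) {f g : Ω → ℝ}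
    (hg : StronglyMeasurable[m] g) (hgi : Integrable g μ) (hfm : AEStronglyMeasurable f μ)
    {C : ℝ} (hf : ∀ᵐ ω ∂μ, |f ω| ≤ C) :
    ∫ ω, f ω * g ω ∂μ = ∫ ω, μ[f | m] ω * g ω ∂μ := by
  have hfg : Integrable (f * g) μ := hgi.bdd_mul hfm (by simpa using hf)
  have hfi : Integrable f μ := (integrable_const C).mono' hfm (by simpa using hf)
  rw [← integral_condExp hm]
  exact integral_congr_ae (condExp_mul_of_stronglyMeasurable_right hg hfg hfi)

section PseudoOutcome

variable {𝒳 : Type*}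

noncomputable def pseudoOutcome (μ0 μ1 : 𝒳 → ℝ) (p : ℝ) (x : 𝒳) (y z : ℝ) : ℝ :=
  (μ1 x - μ0 x) + (y - μ1 x) * z / p - (y - μ0 x) * (1 - z) / (1 - p)

noncomputable def treatedPseudoOutcome (μ0 μ1 : 𝒳 → ℝ) (p : ℝ) (x : 𝒳) (y1 : ℝ) : ℝ :=
  μ1 x - μ0 x + (y1 - μ1 x) / p

noncomputable def controlPseudoOutcome (μ0 μ1 : 𝒳 → ℝ) (p : ℝ) (x : 𝒳) (y0 : ℝ) : ℝ :=
  μ1 x - μ0 x - (y0 - μ0 x) / (1 - p)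

theorem pseudoOutcome_of_eq_zero_or_eq_one {z : ℝ} (hz : z = 0 ∨ z = 1) (μ0 μ1 : 𝒳 → ℝ)
    (p : ℝ) (x : 𝒳) (y0 y1 : ℝ) :
    pseudoOutcome μ0 μ1 p x (z * y1 + (1 - z) * y0) z
      = z * treatedPseudoOutcome μ0 μ1 p x y1 + (1 - z) * controlPseudoOutcome μ0 μ1 p x y0 := by
  rcases hz with rfl | rfl <;>
    simp only [pseudoOutcome, treatedPseudoOutcome, controlPseudoOutcome] <;> ring

theorem mul_treatedPseudoOutcome_add_mul_controlPseudoOutcome {p : ℝ} (hp0 : p ≠ 0)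
    (hp1 : 1 - p ≠ 0) (μ0 μ1 : 𝒳 → ℝ) (x : 𝒳) (y0 y1 : ℝ) :
    p * treatedPseudoOutcome μ0 μ1 p x y1 + (1 - p) * controlPseudoOutcome μ0 μ1 p x y0
      = y1 - y0 := by
  simp only [treatedPseudoOutcome, controlPseudoOutcome]
  field_simp
  ring

end PseudoOutcome

section CausalModel

variable {Ω 𝒳 : Type*} [MeasurableSpace Ω] [MeasurableSpace 𝒳] {P : Measure Ω}
  [IsProbabilityMeasure P] {X : Ω → 𝒳} {Y0 Y1 Z Y : Ω → ℝ} {μ0 μ1 : 𝒳 → ℝ} {p L : ℝ}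

structure IsRandomizedTrial (P : Measure Ω) (X : Ω → 𝒳) (Y0 Y1 Z : Ω → ℝ) (p : ℝ) : Prop where
  measurable_treatment : Measurable Z
  treatment_eq_zero_or_one : ∀ ω, Z ω = 0 ∨ Z ω = 1
  propensity_mem : p ∈ Set.Ioo (0 : ℝ) 1
  measure_treated : P {ω | Z ω = 1} = ENNReal.ofReal p
  indepFun : IndepFun Z (fun ω => (X ω, Y0 ω, Y1 ω)) P

/- Nothing is assumed about the moments of `Y₀, Y₁`: each arm has positive probability and is
independent of `(X, Y₀, Y₁)`, so the bound on `τ̂` over an arm transfers to that arm's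
pseudo-outcome on all of `Ω`. -/
theorem ae_abs_treatedPseudoOutcome_le_and_controlPseudoOutcome_le
    (hT : IsRandomizedTrial P X Y0 Y1 Z p) (hY : ∀ ω, Y ω = Z ω * Y1 ω + (1 - Z ω) * Y0 ω) (hμ0 : Measurable μ0) (hμ1 : Measurable μ1)
    (hbound : ∀ᵐ ω ∂P, |pseudoOutcome μ0 μ1 p (X ω) (Y ω) (Z ω)| ≤ L) :
    (∀ᵐ ω ∂P, |treatedPseudoOutcome μ0 μ1 p (X ω) (Y1 ω)| ≤ L) ∧
      ∀ᵐ ω ∂P, |controlPseudoOutcome μ0 μ1 p (X ω) (Y0 ω)| ≤ L := by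
  obtain ⟨hZ, hZval, ⟨hp0, hp1⟩, hZp, hindep⟩ := hT
  simp only [hY, pseudoOutcome_of_eq_zero_or_eq_one (hZval _)] at hbound
  have hS1 : P (Z ⁻¹' {1}) ≠ 0 := by
    simpa [Set.preimage, hZp] using hp0
  have hS0 : P (Z ⁻¹' {0}) ≠ 0 := by
    have hcompl : Z ⁻¹' {0} = {ω | Z ω = 1}ᶜ := by
      ext ω; rcases hZval ω with h | h <;> simp [h]
    have hS : MeasurableSet {ω | Z ω = 1} := hZ (measurableSet_singleton 1)
    rw [hcompl, measure_compl hS (measure_ne_top _ _), hZp, measure_univ]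
    exact (tsub_pos_of_lt (ENNReal.ofReal_lt_one.2 hp1)).ne'
  constructor
  · refine hindep.ae_mem_of_ae_imp (T := {v | |treatedPseudoOutcome μ0 μ1 p v.1 v.2.2| ≤ L})
      (measurableSet_singleton 1)
      (measurableSet_le (by unfold treatedPseudoOutcome; fun_prop) measurable_const) hS1
      (hbound.mono fun ω h hZ1 => ?_)
    simp only [Set.mem_singleton_iff] at hZ1
    simpa [hZ1] using h
  · refine hindep.ae_mem_of_ae_imp (T := {v | |controlPseudoOutcome μ0 μ1 p v.1 v.2.1| ≤ L})
      (measurableSet_singleton 0)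
      (measurableSet_le (by unfold controlPseudoOutcome; fun_prop) measurable_const) hS0
      (hbound.mono fun ω h hZ0 => ?_)
    simp only [Set.mem_singleton_iff] at hZ0
    simpa [hZ0] using h

theorem ae_abs_sub_le_of_ae_abs_pseudoOutcome_le (hT : IsRandomizedTrial P X Y0 Y1 Z p)
    (hY : ∀ ω, Y ω = Z ω * Y1 ω + (1 - Z ω) * Y0 ω) (hμ0 : Measurable μ0) (hμ1 : Measurable μ1)
    (hbound : ∀ᵐ ω ∂P, |pseudoOutcome μ0 μ1 p (X ω) (Y ω) (Z ω)| ≤ L) :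
    ∀ᵐ ω ∂P, |Y1 ω - Y0 ω| ≤ L := by
  obtain ⟨hA, hB⟩ := ae_abs_treatedPseudoOutcome_le_and_controlPseudoOutcome_le hT hY hμ0
    hμ1 hbound
  obtain ⟨hp0, hp1⟩ := hT.propensity_mem
  have hq0 : 0 < 1 - p := sub_pos.2 hp1
  filter_upwards [hA, hB] with ω hAω hBω
  rw [← mul_treatedPseudoOutcome_add_mul_controlPseudoOutcome hp0.ne' hq0.ne' μ0 μ1 (X ω)]
  calc _ ≤ p * |treatedPseudoOutcome μ0 μ1 p (X ω) (Y1 ω)|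
        + (1 - p) * |controlPseudoOutcome μ0 μ1 p (X ω) (Y0 ω)| := by
        refine (abs_add_le _ _).trans_eq ?_
        rw [abs_mul, abs_mul, abs_of_pos hp0, abs_of_pos hq0]
    _ ≤ p * L + (1 - p) * L := by gcongr
    _ = L := by ring

theorem integral_pseudoOutcome_mul_eq (hX : Measurable X) (hY0 : Measurable Y0)
    (hY1 : Measurable Y1) (hT : IsRandomizedTrial P X Y0 Y1 Z p)
    (hY : ∀ ω, Y ω = Z ω * Y1 ω + (1 - Z ω) * Y0 ω) {τ : 𝒳 → ℝ}
    (hτ : P[fun ω => Y1 ω - Y0 ω | MeasurableSpace.comap X inferInstance]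
      =ᵐ[P] fun ω => τ (X ω))
    (hμ0 : Measurable μ0) (hμ1 : Measurable μ1)
    (hbound : ∀ᵐ ω ∂P, |pseudoOutcome μ0 μ1 p (X ω) (Y ω) (Z ω)| ≤ L) {g : 𝒳 → ℝ}
    (hg : Measurable g) (hgi : Integrable (fun ω => g (X ω)) P) :
    ∫ ω, pseudoOutcome μ0 μ1 p (X ω) (Y ω) (Z ω) * g (X ω) ∂P = ∫ ω, τ (X ω) * g (X ω) ∂P := by
  obtain ⟨hA, hB⟩ := ae_abs_treatedPseudoOutcome_le_and_controlPseudoOutcome_le hT hY hμ0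
    hμ1 hbound
  have hAg : Integrable (fun ω => treatedPseudoOutcome μ0 μ1 p (X ω) (Y1 ω) * g (X ω)) P :=
    hgi.bdd_mul (by unfold treatedPseudoOutcome; fun_prop) (by simpa using hA)
  have hBg : Integrable (fun ω => controlPseudoOutcome μ0 μ1 p (X ω) (Y0 ω) * g (X ω)) P :=
    hgi.bdd_mul (by unfold controlPseudoOutcome; fun_prop) (by simpa using hB)
  have hmix := integral_mul_add_one_sub_mul_of_indepFun hT.measurable_treatment
    hT.treatment_eq_zero_or_one hT.propensity_mem.1.le hT.measure_treated hAg hBg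
    (hT.indepFun.comp measurable_id (by unfold treatedPseudoOutcome; fun_prop :
      Measurable fun v : 𝒳 × ℝ × ℝ => treatedPseudoOutcome μ0 μ1 p v.1 v.2.2 * g v.1))
    (hT.indepFun.comp measurable_id (by unfold controlPseudoOutcome; fun_prop :
      Measurable fun v : 𝒳 × ℝ × ℝ => controlPseudoOutcome μ0 μ1 p v.1 v.2.1 * g v.1))
  have hgX : StronglyMeasurable[MeasurableSpace.comap X inferInstance] fun ω => g (X ω) :=
    (hg.comp (measurable_iff_comap_le.2 le_rfl)).stronglyMeasurable
  calc ∫ ω, pseudoOutcome μ0 μ1 p (X ω) (Y ω) (Z ω) * g (X ω) ∂P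
      = ∫ ω, (Z ω * (treatedPseudoOutcome μ0 μ1 p (X ω) (Y1 ω) * g (X ω))
          + (1 - Z ω) * (controlPseudoOutcome μ0 μ1 p (X ω) (Y0 ω) * g (X ω))) ∂P := by
        congr 1 with ω
        rw [hY, pseudoOutcome_of_eq_zero_or_eq_one (hT.treatment_eq_zero_or_one ω)]
        ring
    _ = ∫ ω, (p * (treatedPseudoOutcome μ0 μ1 p (X ω) (Y1 ω) * g (X ω))
          + (1 - p) * (controlPseudoOutcome μ0 μ1 p (X ω) (Y0 ω) * g (X ω))) ∂P := by
        rw [hmix, integral_add (hAg.const_mul p) (hBg.const_mul (1 - p)), integral_const_mul,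
          integral_const_mul]
    _ = ∫ ω, (Y1 ω - Y0 ω) * g (X ω) ∂P := by
        congr 1 with ω
        rw [← mul_treatedPseudoOutcome_add_mul_controlPseudoOutcome hT.propensity_mem.1.ne'
          (sub_pos.2 hT.propensity_mem.2).ne' μ0 μ1 (X ω) (Y0 ω) (Y1 ω)]
        ring
    _ = ∫ ω, τ (X ω) * g (X ω) ∂P := by
        rw [integral_mul_eq_integral_condExp_mul (f := fun ω => Y1 ω - Y0 ω) hX.comap_le hgX hgi
          (hY1.sub hY0).aestronglyMeasurable
          (ae_abs_sub_le_of_ae_abs_pseudoOutcome_le hT hY hμ0 hμ1 hbound)]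
        exact integral_congr_ae (hτ.mono fun ω h => congrArg (· * g (X ω)) h)

theorem ae_abs_cate_le (hT : IsRandomizedTrial P X Y0 Y1 Z p)
    (hY : ∀ ω, Y ω = Z ω * Y1 ω + (1 - Z ω) * Y0 ω) {τ : 𝒳 → ℝ}
    (hτ : P[fun ω => Y1 ω - Y0 ω | MeasurableSpace.comap X inferInstance]
      =ᵐ[P] fun ω => τ (X ω))
    (hμ0 : Measurable μ0) (hμ1 : Measurable μ1)
    (hbound : ∀ᵐ ω ∂P, |pseudoOutcome μ0 μ1 p (X ω) (Y ω) (Z ω)| ≤ L) :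
    ∀ᵐ ω ∂P, |τ (X ω)| ≤ L := by
  filter_upwards [hτ, ae_bdd_abs_condExp_of_ae_bdd_abs (m := MeasurableSpace.comap X inferInstance)
    (ae_abs_sub_le_of_ae_abs_pseudoOutcome_le hT hY hμ0 hμ1 hbound)]
    with ω hτω hbω
  rwa [← hτω]

theorem integral_sub_cate_sq_eq (hX : Measurable X) (hY0 : Measurable Y0)
    (hY1 : Measurable Y1) (hT : IsRandomizedTrial P X Y0 Y1 Z p)
    (hY : ∀ ω, Y ω = Z ω * Y1 ω + (1 - Z ω) * Y0 ω) {τ : 𝒳 → ℝ} (hτm : Measurable τ)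
    (hτ : P[fun ω => Y1 ω - Y0 ω | MeasurableSpace.comap X inferInstance]
      =ᵐ[P] fun ω => τ (X ω))
    (hμ0 : Measurable μ0) (hμ1 : Measurable μ1)
    (hbound : ∀ᵐ ω ∂P, |pseudoOutcome μ0 μ1 p (X ω) (Y ω) (Z ω)| ≤ L) {g : 𝒳 → ℝ}
    (hg : Measurable g) (hg2 : MemLp (fun ω => g (X ω)) 2 P) :
    ∫ ω, (g (X ω) - τ (X ω)) ^ 2 ∂P
      = ∫ ω, (pseudoOutcome μ0 μ1 p (X ω) (Y ω) (Z ω) - g (X ω)) ^ 2 ∂P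
        - ∫ ω, pseudoOutcome μ0 μ1 p (X ω) (Y ω) (Z ω) ^ 2 ∂P + ∫ ω, τ (X ω) ^ 2 ∂P := by
  have hZ := hT.measurable_treatment
  have hYm : Measurable Y := by rw [funext hY]; fun_prop
  have hpseudo2 : MemLp (fun ω => pseudoOutcome μ0 μ1 p (X ω) (Y ω) (Z ω)) 2 P :=
    MemLp.of_bound (by unfold pseudoOutcome; fun_prop) L (by simpa using hbound)
  have hτ2 : MemLp (fun ω => τ (X ω)) 2 P :=
    MemLp.of_bound (hτm.comp hX).aestronglyMeasurable L
      (by simpa using ae_abs_cate_le hT hY hτ hμ0 hμ1 hbound)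
  exact integral_sq_sub_eq_of_integral_mul_eq hpseudo2 hτ2 hg2
    (integral_pseudoOutcome_mul_eq hX hY0 hY1 hT hY hτ hμ0 hμ1 hbound hg
      (hg2.integrable one_le_two))

end CausalModel

theorem causal_stacking_convex_oracle_inequality_general
    {Ω 𝒳 : Type*} [MeasurableSpace Ω] [MeasurableSpace 𝒳]
    (P : Measure Ω) [IsProbabilityMeasure P]
    (X : Ω → 𝒳) (Y0 Y1 Z : Ω → ℝ)
    (hX : Measurable X) (hY0 : Measurable Y0) (hY1 : Measurable Y1) (hZ : Measurable Z)
    (hZval : ∀ ω, Z ω = 0 ∨ Z ω = 1)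
    (p : ℝ) (hp : p ∈ Set.Ioo (0 : ℝ) 1)
    (hZp : P {ω | Z ω = 1} = ENNReal.ofReal p)
    (hindep : IndepFun Z (fun ω => (X ω, Y0 ω, Y1 ω)) P)
    (Y : Ω → ℝ) (hY : ∀ ω, Y ω = Z ω * Y1 ω + (1 - Z ω) * Y0 ω)
    -- the CATE function: a measurable version of E[Y₁ − Y₀ | X]
    (τ : 𝒳 → ℝ) (hτm : Measurable τ)
    (hτ : P[fun ω => Y1 ω - Y0 ω | MeasurableSpace.comap X inferInstance]
        =ᵐ[P] fun ω => τ (X ω))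
    (μ0 μ1 : 𝒳 → ℝ) (hμ0 : Measurable μ0) (hμ1 : Measurable μ1)
    (K : ℕ)
    (τk : Fin K → 𝒳 → ℝ) (hτk : ∀ k, Measurable (τk k))
    -- the pseudo-outcome built from the generic sample `(X, Y, Z)`
    (τhat : Ω → ℝ)
    (hτhat : ∀ ω, τhat ω = (μ1 (X ω) - μ0 (X ω))
        + (Y ω - μ1 (X ω)) * Z ω / p - (Y ω - μ0 (X ω)) * (1 - Z ω) / (1 - p))
    -- boundedness: |τ̂| ≤ L and |τ̂_k(X)| ≤ L almost surely
    (L : ℝ) (hL : 0 < L)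
    (hbτhat : ∀ᵐ ω ∂P, |τhat ω| ≤ L)
    (hbτk : ∀ k, ∀ᵐ ω ∂P, |τk k (X ω)| ≤ L)
    -- the i.i.d. samples
    (m : ℕ) (hm : 0 < m)
    (Xs : Fin m → Ω → 𝒳) (Ys Zs : Fin m → Ω → ℝ)
    (hXs : ∀ i, Measurable (Xs i)) (hYs : ∀ i, Measurable (Ys i))
    (hZs : ∀ i, Measurable (Zs i))
    (hiid : iIndepFun (fun i ω => (Xs i ω, Ys i ω, Zs i ω)) P)
    (hident : ∀ i, Measure.map (fun ω => (Xs i ω, Ys i ω, Zs i ω)) P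
        = Measure.map (fun ω => (X ω, Y ω, Z ω)) P)
    -- the per-sample pseudo-outcomes
    (τhats : Fin m → Ω → ℝ)
    (hτhats : ∀ i ω, τhats i ω = (μ1 (Xs i ω) - μ0 (Xs i ω))
        + (Ys i ω - μ1 (Xs i ω)) * Zs i ω / p
        - (Ys i ω - μ0 (Xs i ω)) * (1 - Zs i ω) / (1 - p))
    -- ŵ is any minimizer of the empirical stacking loss over the simplex Δ_K
    (what : Ω → Fin K → ℝ)
    (hwhat_mem : ∀ ω, (∀ k, 0 ≤ what ω k) ∧ ∑ k, what ω k = 1)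
    (hwhat_min : ∀ ω, ∀ w : Fin K → ℝ, (∀ k, 0 ≤ w k) → (∑ k, w k = 1) →
      (1 / (m : ℝ)) * ∑ i, (τhats i ω - ∑ k, what ω k * τk k (Xs i ω)) ^ 2
        ≤ (1 / (m : ℝ)) * ∑ i, (τhats i ω - ∑ k, w k * τk k (Xs i ω)) ^ 2)
    (δ : ℝ) (hδ : δ ∈ Set.Ioo (0 : ℝ) 1) :
    1 - ENNReal.ofReal δ ≤
      P {ω | ∀ w : Fin K → ℝ, (∀ k, 0 ≤ w k) → (∑ k, w k = 1) →
        ∫ ω', (∑ k, what ω k * τk k (X ω') - τ (X ω')) ^ 2 ∂P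
          ≤ (∫ ω', (∑ k, w k * τk k (X ω') - τ (X ω')) ^ 2 ∂P)
            + 8 * Real.sqrt 2 * L ^ 2
              * Real.sqrt (Real.log (2 * (K + 1) ^ 2 / δ) / m)} := by
  have hT : IsRandomizedTrial P X Y0 Y1 Z p := ⟨hZ, hZval, hp, hZp, hindep⟩
  obtain ⟨hδ0, hδ1⟩ := hδ
  obtain rfl : τhat = fun ω => pseudoOutcome μ0 μ1 p (X ω) (Y ω) (Z ω) := funext hτhat
  obtain rfl : τhats = fun i ω => pseudoOutcome μ0 μ1 p (Xs i ω) (Ys i ω) (Zs i ω) :=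
    funext fun i => funext (hτhats i)
  beta_reduce at hbτhat hwhat_min
  have hξ : Measurable fun ω => (X ω, Y ω, Z ω) := by rw [funext hY]; fun_prop
  have hR : 1 ≤ 2 * ((K : ℝ) + 1) ^ 2 / δ := by
    rw [le_div_iff₀ hδ0]; nlinarith [(K.cast_nonneg : (0 : ℝ) ≤ K)]
  have hbudget : (Fintype.card (Fin K) : ℝ) ^ 2 * (2 / (2 * ((K : ℝ) + 1) ^ 2 / δ)) ≤ δ := by
    rw [Fintype.card_fin, div_div_eq_mul_div, mul_div_mul_left _ _ two_ne_zero, ← mul_div_assoc,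
      div_le_iff₀ (by positivity)]
    nlinarith [(K.cast_nonneg : (0 : ℝ) ≤ K)]
  have hrisk : ∀ v : Fin K → ℝ, ∫ ω', (∑ k, v k * τk k (X ω') - τ (X ω')) ^ 2 ∂P
      = ∫ ω', (pseudoOutcome μ0 μ1 p (X ω') (Y ω') (Z ω') - ∑ k, v k * τk k (X ω')) ^ 2 ∂P
        - ∫ ω', pseudoOutcome μ0 μ1 p (X ω') (Y ω') (Z ω') ^ 2 ∂P + ∫ ω', τ (X ω') ^ 2 ∂P :=
    fun v => integral_sub_cate_sq_eq hX hY0 hY1 hT hY hτm hτ hμ0 hμ1 hbτhat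
      (g := fun x => ∑ k, v k * τk k x) (by fun_prop) (memLp_finsetSum _ fun k _ =>
        (MemLp.of_bound ((hτk k).comp hX).aestronglyMeasurable L
          (by simpa using hbτk k)).const_mul (v k))
  refine (tsub_le_tsub_left (ENNReal.ofReal_le_ofReal hbudget) 1).trans
    ((one_sub_le_measure_forall_simplex_abs_mean_sq_sub_integral_sq_le hm hiid
      (fun i => ⟨by fun_prop, hξ.aemeasurable, hident i⟩)
      (u := fun v => pseudoOutcome μ0 μ1 p v.1 v.2.1 v.2.2) (w := fun k v => τk k v.1)
      (by unfold pseudoOutcome; fun_prop) (fun k => by fun_prop) hL hbτhat hbτk hR).trans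
      (measure_mono fun ω hω w hw0 hw1 => ?_))
  obtain ⟨hv0, hv1⟩ := hwhat_mem ω
  rw [hrisk, hrisk]
  linarith [(abs_le.1 (hω _ hv0 hv1)).1, (abs_le.1 (hω w hw0 hw1)).2, hwhat_min ω w hw0 hw1]

/-- Intermediate oracle inequality in the proof of Proposition 1: with probability at
least `1 − δ`, the stacked model is competitive with the best *convex combination* of the
candidate models:
`‖Σ_k ŵ_k τ̂_k − τ‖₂² ≤ min_{w ∈ Δ_K} ‖Σ_k w_k τ̂_k − τ‖₂² + 8√2 L² √(log(2(K+1)²/δ)/m)`,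
stated as: the bound holds simultaneously for every `w ∈ Δ_K` on the right-hand side. -/
theorem causal_stacking_convex_oracle_inequality
    {Ω 𝒳 : Type*} [MeasurableSpace Ω] [MeasurableSpace 𝒳]
    (P : Measure Ω) [IsProbabilityMeasure P]
    (X : Ω → 𝒳) (Y0 Y1 Z : Ω → ℝ)
    (hX : Measurable X) (hY0 : Measurable Y0) (hY1 : Measurable Y1) (hZ : Measurable Z)
    (hZval : ∀ ω, Z ω = 0 ∨ Z ω = 1)
    (p : ℝ) (hp : p ∈ Set.Ioo (0 : ℝ) 1)
    (hZp : P {ω | Z ω = 1} = ENNReal.ofReal p)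
    (hindep : IndepFun Z (fun ω => (X ω, Y0 ω, Y1 ω)) P)
    (Y : Ω → ℝ) (hY : ∀ ω, Y ω = Z ω * Y1 ω + (1 - Z ω) * Y0 ω)
    -- the CATE function: a measurable version of E[Y₁ − Y₀ | X]
    (τ : 𝒳 → ℝ) (hτm : Measurable τ)
    (hτ : P[fun ω => Y1 ω - Y0 ω | MeasurableSpace.comap X inferInstance]
        =ᵐ[P] fun ω => τ (X ω))
    (μ0 μ1 : 𝒳 → ℝ) (hμ0 : Measurable μ0) (hμ1 : Measurable μ1)
    (K : ℕ) (hK : 0 < K)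
    (τk : Fin K → 𝒳 → ℝ) (hτk : ∀ k, Measurable (τk k))
    -- the pseudo-outcome built from the generic sample `(X, Y, Z)`
    (τhat : Ω → ℝ)
    (hτhat : ∀ ω, τhat ω = (μ1 (X ω) - μ0 (X ω))
        + (Y ω - μ1 (X ω)) * Z ω / p - (Y ω - μ0 (X ω)) * (1 - Z ω) / (1 - p))
    -- boundedness: |τ̂| ≤ L and |τ̂_k(X)| ≤ L almost surely
    (L : ℝ) (hL : 0 < L)
    (hbτhat : ∀ᵐ ω ∂P, |τhat ω| ≤ L)
    (hbτk : ∀ k, ∀ᵐ ω ∂P, |τk k (X ω)| ≤ L)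
    -- the i.i.d. samples
    (m : ℕ) (hm : 0 < m)
    (Xs : Fin m → Ω → 𝒳) (Ys Zs : Fin m → Ω → ℝ)
    (hXs : ∀ i, Measurable (Xs i)) (hYs : ∀ i, Measurable (Ys i))
    (hZs : ∀ i, Measurable (Zs i))
    (hiid : iIndepFun (fun i ω => (Xs i ω, Ys i ω, Zs i ω)) P)
    (hident : ∀ i, Measure.map (fun ω => (Xs i ω, Ys i ω, Zs i ω)) P
        = Measure.map (fun ω => (X ω, Y ω, Z ω)) P)
    -- the per-sample pseudo-outcomes
    (τhats : Fin m → Ω → ℝ)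
    (hτhats : ∀ i ω, τhats i ω = (μ1 (Xs i ω) - μ0 (Xs i ω))
        + (Ys i ω - μ1 (Xs i ω)) * Zs i ω / p
        - (Ys i ω - μ0 (Xs i ω)) * (1 - Zs i ω) / (1 - p))
    -- ŵ is any minimizer of the empirical stacking loss over the simplex Δ_K
    (what : Ω → Fin K → ℝ)
    (hwhat_mem : ∀ ω, (∀ k, 0 ≤ what ω k) ∧ ∑ k, what ω k = 1)
    (hwhat_min : ∀ ω, ∀ w : Fin K → ℝ, (∀ k, 0 ≤ w k) → (∑ k, w k = 1) →
      (1 / (m : ℝ)) * ∑ i, (τhats i ω - ∑ k, what ω k * τk k (Xs i ω)) ^ 2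
        ≤ (1 / (m : ℝ)) * ∑ i, (τhats i ω - ∑ k, w k * τk k (Xs i ω)) ^ 2)
    (δ : ℝ) (hδ : δ ∈ Set.Ioo (0 : ℝ) 1) :
    1 - ENNReal.ofReal δ ≤
      P {ω | ∀ w : Fin K → ℝ, (∀ k, 0 ≤ w k) → (∑ k, w k = 1) →
        ∫ ω', (∑ k, what ω k * τk k (X ω') - τ (X ω')) ^ 2 ∂P
          ≤ (∫ ω', (∑ k, w k * τk k (X ω') - τ (X ω')) ^ 2 ∂P)
            + 8 * Real.sqrt 2 * L ^ 2
              * Real.sqrt (Real.log (2 * (K + 1) ^ 2 / δ) / m)} :=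
  causal_stacking_convex_oracle_inequality_general P X Y0 Y1 Z hX hY0 hY1 hZ hZval p hp hZp hindep Y
    hY τ hτm hτ μ0 μ1 hμ0 hμ1 K τk hτk τhat hτhat L hL hbτhat hbτk m hm Xs Ys Zs hXs hYs hZs hiid
    hident τhats hτhats what hwhat_mem hwhat_min δ hδ
end

section
/- Suppose Y₀, Y₁ are square-integrable, μ̂₀, μ̂₁, and the candidate models τ̂₁, …, τ̂_K are bounded measurable functions, and Z is independent of (X, Y₀, Y₁) with P(Z = 1) = p ∈ (0,1). Then for every weight vector w ∈ ℝ^K, the population stacking loss decomposes as ℓ(w) = E[(τ̂ − τ(X))²] + ‖τ − Σ_{k=1}^K w_k τ̂_k‖₂². In particular, minimizing ℓ over w is equivalent to minimizing the squared L²(P_X) distance between the combined model Σ_k w_k τ̂_k and the true CATE function τ, since the first term does not depend on w. -/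
/-!
Write `A = τ̂ − τ(X)` and `h = τ − Σₖ wₖ τ̂ₖ`. The loss is `E[(A + h(X))²]`, so it suffices that
`E[A h(X)] = 0`. Since `Z ∈ {0, 1}`, the pseudo-outcome is
`(Y₁ − Y₀) + (Z/p − 1)(Y₁ − μ̂₁(X)) − ((1 − Z)/(1 − p) − 1)(Y₀ − μ̂₀(X))`.
Because `τ(X) = E[Y₁ − Y₀ | X]`, the part `Y₁ − Y₀ − τ(X)` is orthogonal to `h(X)`; the weights
`Z/p − 1` and `(1 − Z)/(1 − p) − 1` have mean zero and are independent of `(X, Y₀, Y₁)`, so the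
two residual terms are orthogonal to every function of `(X, Y₀, Y₁)`.
-/

open MeasureTheory ProbabilityTheory

section General

variable {Ω : Type*} {m m0 : MeasurableSpace Ω} {P : Measure Ω}

theorem integral_mul_condExp (hm : m ≤ m0) [SigmaFinite (P.trim hm)] {f g : Ω → ℝ}
    (hf : StronglyMeasurable[m] f) (hfg : Integrable (f * g) P) (hg : Integrable g P) :
    ∫ ω, f ω * P[g|m] ω ∂P = ∫ ω, f ω * g ω ∂P :=
  calc ∫ ω, f ω * P[g|m] ω ∂P = ∫ ω, P[f * g|m] ω ∂P :=
        integral_congr_ae (condExp_mul_of_stronglyMeasurable_left hf hfg hg).symm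
    _ = ∫ ω, f ω * g ω ∂P := integral_condExp hm

theorem integral_sub_mul_eq_zero_of_condExp_ae_eq [IsFiniteMeasure P] (hm : m ≤ m0)
    {f c g : Ω → ℝ} (hf : MemLp f 2 P) (hc : P[f|m] =ᵐ[P] c) (hg : MemLp g 2 P)
    (hgm : StronglyMeasurable[m] g) :
    ∫ ω, (f ω - c ω) * g ω ∂P = 0 := by
  have hc2 : MemLp c 2 P := (hf.condExp one_le_two).ae_eq hc
  have hfg : Integrable (fun ω => f ω * g ω) P := hf.integrable_mul hg
  have hcg : Integrable (fun ω => c ω * g ω) P := hc2.integrable_mul hg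
  have hcg_eq : ∫ ω, c ω * g ω ∂P = ∫ ω, f ω * g ω ∂P :=
    calc ∫ ω, c ω * g ω ∂P = ∫ ω, g ω * P[f|m] ω ∂P :=
          integral_congr_ae (hc.mono fun ω hω => by simp [hω, mul_comm])
      _ = ∫ ω, g ω * f ω ∂P :=
          integral_mul_condExp hm hgm (hg.integrable_mul hf) (hf.integrable one_le_two)
      _ = ∫ ω, f ω * g ω ∂P := by simp_rw [mul_comm]
  simp_rw [sub_mul]
  rw [integral_sub hfg hcg, hcg_eq, sub_self]

theorem ProbabilityTheory.IndepFun.integral_mul_eq_zero {U V : Ω → ℝ} (hUV : IndepFun U V P)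
    (hU : AEStronglyMeasurable U P) (hV : AEStronglyMeasurable V P) (hU0 : ∫ ω, U ω ∂P = 0) :
    ∫ ω, U ω * V ω ∂P = 0 := by
  simpa [hU0] using hUV.integral_mul_eq_mul_integral hU hV

theorem integral_eq_measureReal_of_eq_zero_or_one {Z : Ω → ℝ} (hZ : Measurable Z)
    (hZval : ∀ ω, Z ω = 0 ∨ Z ω = 1) : ∫ ω, Z ω ∂P = P.real {ω | Z ω = 1} := by
  have hs : MeasurableSet {ω | Z ω = 1} := hZ (measurableSet_singleton 1)
  calc ∫ ω, Z ω ∂P = ∫ ω, {ω | Z ω = 1}.indicator (fun _ => (1 : ℝ)) ω ∂P := by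
        refine integral_congr_ae (ae_of_all _ fun ω => ?_)
        rcases hZval ω with h | h <;> simp [h]
    _ = P.real {ω | Z ω = 1} := by
        rw [integral_indicator_const _ hs, smul_eq_mul, mul_one]

theorem integral_div_sub_one_eq_zero [IsProbabilityMeasure P] {Z : Ω → ℝ} {q : ℝ}
    (hZ : Integrable Z P) (hq : q ≠ 0) (hEZ : ∫ ω, Z ω ∂P = q) :
    ∫ ω, (Z ω / q - 1) ∂P = 0 := by
  rw [integral_sub (hZ.div_const q) (integrable_const 1), integral_div, hEZ, div_self hq]
  simp

theorem integral_add_sq_of_integral_mul_eq_zero {f g : Ω → ℝ} (hf : MemLp f 2 P)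
    (hg : MemLp g 2 P) (hfg : ∫ ω, f ω * g ω ∂P = 0) :
    ∫ ω, (f ω + g ω) ^ 2 ∂P = ∫ ω, f ω ^ 2 ∂P + ∫ ω, g ω ^ 2 ∂P := by
  have hexp : ∀ ω, (f ω + g ω) ^ 2 = f ω ^ 2 + g ω ^ 2 + 2 * (f ω * g ω) := fun ω => by ring
  have hf2 : Integrable (fun ω => f ω ^ 2) P := hf.integrable_sq
  have hg2 : Integrable (fun ω => g ω ^ 2) P := hg.integrable_sq
  have hfg' : Integrable (fun ω => 2 * (f ω * g ω)) P := (hf.integrable_mul hg).const_mul 2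
  simp_rw [hexp]
  rw [integral_add (f := fun ω => f ω ^ 2 + g ω ^ 2) (hf2.add hg2) hfg', integral_add hf2 hg2,
    integral_const_mul, hfg, mul_zero, add_zero]

end General

section Stacking

variable {Ω β 𝒳 : Type*} [MeasurableSpace Ω] [MeasurableSpace β] [MeasurableSpace 𝒳]
  {P : Measure Ω}

theorem memLp_comp_of_abs_le [IsFiniteMeasure P] {X : Ω → 𝒳} (hX : Measurable X) {f : 𝒳 → ℝ}
    (hf : Measurable f) {C : ℝ} (hC : ∀ x, |f x| ≤ C) (q : ENNReal) :
    MemLp (fun ω => f (X ω)) q P :=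
  MemLp.of_bound (hf.comp hX).aestronglyMeasurable C (ae_of_all _ fun ω => hC (X ω))

noncomputable def aipwNoise (p z r1 r0 : ℝ) : ℝ := (z / p - 1) * r1 - ((1 - z) / (1 - p) - 1) * r0

theorem aipw_pseudoOutcome_eq {z : ℝ} (hz : z = 0 ∨ z = 1) (p y0 y1 m0 m1 : ℝ) :
    (m1 - m0) + (z * y1 + (1 - z) * y0 - m1) * z / p
        - (z * y1 + (1 - z) * y0 - m0) * (1 - z) / (1 - p)
      = (y1 - y0) + aipwNoise p z (y1 - m1) (y0 - m0) := by
  unfold aipwNoise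
  rcases hz with rfl | rfl <;> ring

theorem memLp_aipwNoise {Z R1 R0 : Ω → ℝ} (hZ : MemLp Z ⊤ P) (hR1 : MemLp R1 2 P)
    (hR0 : MemLp R0 2 P) (p : ℝ) :
    MemLp (fun ω => aipwNoise p (Z ω) (R1 ω) (R0 ω)) 2 P := by
  have hU1 : MemLp (fun ω => Z ω / p - 1) ⊤ P := by
    simpa only [div_eq_mul_inv, Pi.sub_def] using (hZ.mul_const p⁻¹).sub (memLp_top_const 1)
  have hU0 : MemLp (fun ω => (1 - Z ω) / (1 - p) - 1) ⊤ P := by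
    simpa only [div_eq_mul_inv, Pi.sub_def] using
      (((memLp_top_const 1).sub hZ).mul_const (1 - p)⁻¹).sub (memLp_top_const 1)
  exact (hR1.mul' hU1).sub (hR0.mul' hU0)

theorem integral_aipwNoise_mul_eq_zero [IsProbabilityMeasure P] {Z : Ω → ℝ} {V : Ω → β}
    (hZV : IndepFun Z V P) (hZ : Integrable Z P) {p : ℝ} (hEZ : ∫ ω, Z ω ∂P = p)
    (hp0 : p ≠ 0) (hp1 : 1 - p ≠ 0) {r1 r0 f : β → ℝ} (hr1 : Measurable r1)
    (hr0 : Measurable r0) (hf : Measurable f)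
    (hr1f : Integrable (fun ω => r1 (V ω) * f (V ω)) P)
    (hr0f : Integrable (fun ω => r0 (V ω) * f (V ω)) P) :
    ∫ ω, aipwNoise p (Z ω) (r1 (V ω)) (r0 (V ω)) * f (V ω) ∂P = 0 := by
  have hEZ' : ∫ ω, (1 - Z ω) ∂P = 1 - p := by
    rw [integral_sub (integrable_const 1) hZ, hEZ]
    simp
  have hU1 : IndepFun (fun ω => Z ω / p - 1) (fun ω => r1 (V ω) * f (V ω)) P :=
    hZV.comp (φ := fun z => z / p - 1) (by fun_prop) (hr1.mul hf)
  have hU0 : IndepFun (fun ω => (1 - Z ω) / (1 - p) - 1) (fun ω => r0 (V ω) * f (V ω)) P :=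
    hZV.comp (φ := fun z => (1 - z) / (1 - p) - 1) (by fun_prop) (hr0.mul hf)
  have hW1 : Integrable (fun ω => Z ω / p - 1) P := (hZ.div_const p).sub (integrable_const 1)
  have hW0 : Integrable (fun ω => (1 - Z ω) / (1 - p) - 1) P :=
    (((integrable_const 1).sub hZ).div_const (1 - p)).sub (integrable_const 1)
  have hI1 : Integrable (fun ω => (Z ω / p - 1) * (r1 (V ω) * f (V ω))) P :=
    hU1.integrable_mul hW1 hr1f
  have hI0 : Integrable (fun ω => ((1 - Z ω) / (1 - p) - 1) * (r0 (V ω) * f (V ω))) P :=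
    hU0.integrable_mul hW0 hr0f
  calc ∫ ω, aipwNoise p (Z ω) (r1 (V ω)) (r0 (V ω)) * f (V ω) ∂P
      = ∫ ω, ((Z ω / p - 1) * (r1 (V ω) * f (V ω))
          - ((1 - Z ω) / (1 - p) - 1) * (r0 (V ω) * f (V ω))) ∂P := by
        congr with ω
        unfold aipwNoise
        ring
    _ = 0 := by
      rw [integral_sub hI1 hI0,
        hU1.integral_mul_eq_zero hW1.1 hr1f.1 (integral_div_sub_one_eq_zero hZ hp0 hEZ),
        hU0.integral_mul_eq_zero hW0.1 hr0f.1
          (integral_div_sub_one_eq_zero ((integrable_const 1).sub hZ) hp1 hEZ'), sub_zero]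

theorem integral_cate_residual_add_aipwNoise_mul_eq_zero [IsProbabilityMeasure P]
    {X : Ω → 𝒳} (hX : Measurable X) {Y0 Y1 Z : Ω → ℝ} {p : ℝ} {μ0 μ1 τ H : 𝒳 → ℝ}
    (hindep : IndepFun Z (fun ω => (X ω, Y0 ω, Y1 ω)) P) (hZ : MemLp Z ⊤ P)
    (hEZ : ∫ ω, Z ω ∂P = p) (hp0 : p ≠ 0) (hp1 : 1 - p ≠ 0)
    (hμ0 : Measurable μ0) (hμ1 : Measurable μ1) (hF : MemLp (fun ω => Y1 ω - Y0 ω) 2 P)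
    (hR1 : MemLp (fun ω => Y1 ω - μ1 (X ω)) 2 P) (hR0 : MemLp (fun ω => Y0 ω - μ0 (X ω)) 2 P)
    (hτ : P[fun ω => Y1 ω - Y0 ω | MeasurableSpace.comap X inferInstance]
        =ᵐ[P] fun ω => τ (X ω))
    (hH : Measurable H) (hHX : MemLp (fun ω => H (X ω)) 2 P) :
    ∫ ω, ((Y1 ω - Y0 ω - τ (X ω)) + aipwNoise p (Z ω) (Y1 ω - μ1 (X ω)) (Y0 ω - μ0 (X ω)))
      * H (X ω) ∂P = 0 := by
  have hcate : ∫ ω, (Y1 ω - Y0 ω - τ (X ω)) * H (X ω) ∂P = 0 :=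
    integral_sub_mul_eq_zero_of_condExp_ae_eq hX.comap_le hF hτ hHX
      (hH.comp (comap_measurable X)).stronglyMeasurable
  have hnoise :
      ∫ ω, aipwNoise p (Z ω) (Y1 ω - μ1 (X ω)) (Y0 ω - μ0 (X ω)) * H (X ω) ∂P = 0 :=
    integral_aipwNoise_mul_eq_zero (V := fun ω => (X ω, Y0 ω, Y1 ω))
      (r1 := fun v => v.2.2 - μ1 v.1) (r0 := fun v => v.2.1 - μ0 v.1) (f := fun v => H v.1)
      hindep (hZ.integrable le_top) hEZ hp0 hp1 (by fun_prop) (by fun_prop) (by fun_prop)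
      (hR1.integrable_mul hHX) (hR0.integrable_mul hHX)
  simp_rw [add_mul]
  rw [integral_add, hcate, hnoise, add_zero]
  · exact (hF.sub ((hF.condExp one_le_two).ae_eq hτ)).integrable_mul hHX
  · exact (memLp_aipwNoise hZ hR1 hR0 p).integrable_mul hHX

end Stacking

theorem population_stacking_loss_decomposition_general
    {Ω 𝒳 : Type*} [MeasurableSpace Ω] [MeasurableSpace 𝒳]
    (P : Measure Ω) [IsProbabilityMeasure P]
    (X : Ω → 𝒳) (Y0 Y1 Z : Ω → ℝ)
    (hX : Measurable X) (hZ : Measurable Z)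
    (hY0sq : MemLp Y0 2 P) (hY1sq : MemLp Y1 2 P)
    (hZval : ∀ ω, Z ω = 0 ∨ Z ω = 1)
    (p : ℝ) (hp : p ∈ Set.Ioo (0 : ℝ) 1)
    (hZp : P {ω | Z ω = 1} = ENNReal.ofReal p)
    (hindep : IndepFun Z (fun ω => (X ω, Y0 ω, Y1 ω)) P)
    (μ0 μ1 : 𝒳 → ℝ) (hμ0 : Measurable μ0) (hμ1 : Measurable μ1)
    (C0 C1 : ℝ) (hb0 : ∀ x, |μ0 x| ≤ C0) (hb1 : ∀ x, |μ1 x| ≤ C1)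
    (K : ℕ) (τk : Fin K → 𝒳 → ℝ) (hτk : ∀ k, Measurable (τk k))
    (Ck : ℝ) (hbk : ∀ k x, |τk k x| ≤ Ck)
    (Y : Ω → ℝ) (hY : ∀ ω, Y ω = Z ω * Y1 ω + (1 - Z ω) * Y0 ω)
    (τ : 𝒳 → ℝ) (hτm : Measurable τ)
    (hτ : P[fun ω => Y1 ω - Y0 ω | MeasurableSpace.comap X inferInstance]
        =ᵐ[P] fun ω => τ (X ω))
    (τhat : Ω → ℝ)
    (hτhat : ∀ ω, τhat ω = (μ1 (X ω) - μ0 (X ω))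
        + (Y ω - μ1 (X ω)) * Z ω / p - (Y ω - μ0 (X ω)) * (1 - Z ω) / (1 - p)) :
    ∀ w : Fin K → ℝ,
      ∫ ω, (τhat ω - ∑ k, w k * τk k (X ω)) ^ 2 ∂P
        = (∫ ω, (τhat ω - τ (X ω)) ^ 2 ∂P)
          + ∫ ω, (τ (X ω) - ∑ k, w k * τk k (X ω)) ^ 2 ∂P := by
  intro w
  obtain ⟨hp0, hp1⟩ := hp
  set H : 𝒳 → ℝ := fun x => τ x - ∑ k, w k * τk k x
  have hZtop : MemLp Z ⊤ P := memLp_top_of_bound hZ.aestronglyMeasurable 1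
    (ae_of_all _ fun ω => by rcases hZval ω with h | h <;> simp [h])
  have hEZ : ∫ ω, Z ω ∂P = p := by
    rw [integral_eq_measureReal_of_eq_zero_or_one hZ hZval, measureReal_def, hZp,
      ENNReal.toReal_ofReal hp0.le]
  have hF : MemLp (fun ω => Y1 ω - Y0 ω) 2 P := hY1sq.sub hY0sq
  have hR1 : MemLp (fun ω => Y1 ω - μ1 (X ω)) 2 P :=
    hY1sq.sub (memLp_comp_of_abs_le hX hμ1 hb1 2)
  have hR0 : MemLp (fun ω => Y0 ω - μ0 (X ω)) 2 P :=
    hY0sq.sub (memLp_comp_of_abs_le hX hμ0 hb0 2)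
  have hτX : MemLp (fun ω => τ (X ω)) 2 P := (hF.condExp one_le_two).ae_eq hτ
  have hHX : MemLp (fun ω => H (X ω)) 2 P := hτX.sub <| memLp_finsetSum _ fun k _ =>
    (memLp_comp_of_abs_le hX (hτk k) (hbk k) 2).const_mul (w k)
  have hdecomp : ∀ ω, τhat ω - τ (X ω) = (Y1 ω - Y0 ω - τ (X ω))
      + aipwNoise p (Z ω) (Y1 ω - μ1 (X ω)) (Y0 ω - μ0 (X ω)) := fun ω => by
    rw [hτhat, hY, aipw_pseudoOutcome_eq (hZval ω)]
    ring
  calc ∫ ω, (τhat ω - ∑ k, w k * τk k (X ω)) ^ 2 ∂P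
      = ∫ ω, ((τhat ω - τ (X ω)) + H (X ω)) ^ 2 ∂P := by
        congr with ω
        ring
    _ = _ := by
      simp_rw [hdecomp]
      refine integral_add_sq_of_integral_mul_eq_zero
        ((hF.sub hτX).add (memLp_aipwNoise hZtop hR1 hR0 p)) hHX ?_
      exact integral_cate_residual_add_aipwNoise_mul_eq_zero hX hindep hZtop hEZ hp0.ne'
        (sub_ne_zero.2 hp1.ne') hμ0 hμ1 hF hR1 hR0 hτ
        (hτm.sub (Finset.measurable_sum _ fun k _ => (hτk k).const_mul (w k))) hHX

/-- Decomposition of the population stacking loss: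
`ℓ(w) = E[(τ̂ − τ(X))²] + ‖τ − Σ_k w_k τ̂_k‖₂²` for every weight vector `w`. -/
theorem population_stacking_loss_decomposition
    {Ω 𝒳 : Type*} [MeasurableSpace Ω] [MeasurableSpace 𝒳]
    (P : Measure Ω) [IsProbabilityMeasure P]
    (X : Ω → 𝒳) (Y0 Y1 Z : Ω → ℝ)
    (hX : Measurable X) (hY0 : Measurable Y0) (hY1 : Measurable Y1) (hZ : Measurable Z)
    (hY0sq : MemLp Y0 2 P) (hY1sq : MemLp Y1 2 P)
    (hZval : ∀ ω, Z ω = 0 ∨ Z ω = 1)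
    (p : ℝ) (hp : p ∈ Set.Ioo (0 : ℝ) 1)
    (hZp : P {ω | Z ω = 1} = ENNReal.ofReal p)
    (hindep : IndepFun Z (fun ω => (X ω, Y0 ω, Y1 ω)) P)
    (μ0 μ1 : 𝒳 → ℝ) (hμ0 : Measurable μ0) (hμ1 : Measurable μ1)
    (C0 C1 : ℝ) (hb0 : ∀ x, |μ0 x| ≤ C0) (hb1 : ∀ x, |μ1 x| ≤ C1)
    (K : ℕ) (τk : Fin K → 𝒳 → ℝ) (hτk : ∀ k, Measurable (τk k))
    (Ck : ℝ) (hbk : ∀ k x, |τk k x| ≤ Ck)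
    (Y : Ω → ℝ) (hY : ∀ ω, Y ω = Z ω * Y1 ω + (1 - Z ω) * Y0 ω)
    (τ : 𝒳 → ℝ) (hτm : Measurable τ)
    (hτ : P[fun ω => Y1 ω - Y0 ω | MeasurableSpace.comap X inferInstance]
        =ᵐ[P] fun ω => τ (X ω))
    (τhat : Ω → ℝ)
    (hτhat : ∀ ω, τhat ω = (μ1 (X ω) - μ0 (X ω))
        + (Y ω - μ1 (X ω)) * Z ω / p - (Y ω - μ0 (X ω)) * (1 - Z ω) / (1 - p)) :
    ∀ w : Fin K → ℝ,
      ∫ ω, (τhat ω - ∑ k, w k * τk k (X ω)) ^ 2 ∂P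
        = (∫ ω, (τhat ω - τ (X ω)) ^ 2 ∂P)
          + ∫ ω, (τ (X ω) - ∑ k, w k * τk k (X ω)) ^ 2 ∂P :=
  population_stacking_loss_decomposition_general P X Y0 Y1 Z hX hZ hY0sq hY1sq hZval p hp hZp hindep
    μ0 μ1 hμ0 hμ1 C0 C1 hb0 hb1 K τk hτk Ck hbk Y hY τ hτm hτ τhat hτhat
end
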